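/- If the multiplication operator M_f is bounded on H_E and Σ_{x∈X} |f(x)|√(c(x)R(x)) < ∞, then the range of M_f is contained in Fin, the energy-closure of the span of Dirac masses. -/

import Mathlib

open scoped BigOperators ComplexOrder Classical

/-- A (resistance) network: a connected weighted graph with symmetric
nonnegative conductances, no self-loops, and finite total conductance at
each vertex. -/
structure Network (V : Type*) where
  c : V → V → ℝ
  nonneg : ∀ x y, 0 ≤ c x y
  symm : ∀ x y, c x y = c y x
  loopless : ∀ x, c x x = 0
  summ : ∀ x, Summable fun y => c x y
  connected : ∀ x y : V, Relation.ReflTransGen (fun a b => 0 < c a b) x y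

namespace Network

variable {V : Type*}

/-- Total conductance `c(x) = Σ_y c(x,y)`. -/
noncomputable def totalCond (N : Network V) (x : V) : ℝ := ∑' y, N.c x y

/-- The (sesquilinear) energy form `E(u,v)`. -/
noncomputable def energy (N : Network V) (u v : V → ℂ) : ℂ :=
  (1/2) * ∑' p : V × V,
    (N.c p.1 p.2 : ℂ) * (starRingEnd ℂ (u p.1) - starRingEnd ℂ (u p.2)) * (v p.1 - v p.2)

/-- The (real) energy `E(u) = (1/2) Σ c(x,y)|u(x)-u(y)|²`. -/
noncomputable def energyR (N : Network V) (u : V → ℂ) : ℝ :=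
  (1/2) * ∑' p : V × V, N.c p.1 p.2 * ‖u p.1 - u p.2‖ ^ 2

/-- `u` has finite energy iff the defining sum converges (absolutely). -/
def FiniteEnergy (N : Network V) (u : V → ℂ) : Prop :=
  Summable fun p : V × V => N.c p.1 p.2 * ‖u p.1 - u p.2‖ ^ 2

/-- The graph Laplacian `(Δu)(x) = Σ_y c(x,y)(u(x)-u(y))`. -/
noncomputable def lap (N : Network V) (u : V → ℂ) (x : V) : ℂ :=
  ∑' y, (N.c x y : ℂ) * (u x - u y)

end Network

/-- The Dirac mass at `x`. -/
noncomputable def delta {V : Type*} (x : V) : V → ℂ := fun y => if y = x then 1 else 0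

open scoped InnerProductSpace ComplexOrder BigOperators Classical

/-- Dirac's rank-one operator `|a⟩⟨b| : u ↦ ⟪b,u⟫ • a`. -/
noncomputable def rankOne {H : Type*} [NormedAddCommGroup H] [InnerProductSpace ℂ H]
    (a b : H) : H →L[ℂ] H := (innerSL ℂ b).smulRight a

/-!
Since `Σ ‖f x‖ ‖δ x‖ ‖v x‖ < ∞` and `‖|δ x⟩⟨v x|‖ = ‖δ x‖ ‖v x‖`, the series
`T = Σ f x • |δ x⟩⟨v x|` converges in operator norm. By biorthogonality `⟪v y, T u⟫ = f y ⟪v y, u⟫`,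
which are also the coefficients of `M u`; as the `v y` span a dense subspace, `M = T`. Every
partial sum of `T u` lies in the span of the `δ x`, so `M u = T u` lies in its closure.
-/

open Submodule

theorem eq_of_inner_eq_of_dense_span {𝕜 H : Type*} [RCLike 𝕜] [NormedAddCommGroup H]
    [InnerProductSpace 𝕜 H] {s : Set H} (hs : Dense (span 𝕜 s : Set H)) {a b : H}
    (h : ∀ w ∈ s, ⟪w, a⟫_𝕜 = ⟪w, b⟫_𝕜) : a = b :=
  hs.eq_of_inner_right 𝕜 fun _ hw =>
    LinearMap.eqOn_span' (f := (innerₛₗ 𝕜).flip a) (g := (innerₛₗ 𝕜).flip b) h hw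

namespace ContinuousLinearMap

variable {ι 𝕜 E F : Type*} [NontriviallyNormedField 𝕜] [NormedAddCommGroup E] [NormedSpace 𝕜 E]
  [NormedAddCommGroup F] [NormedSpace 𝕜 F] {T : ι → E →L[𝕜] F}

theorem tsum_apply (hT : Summable T) (u : E) : (∑' i, T i) u = ∑' i, T i u :=
  (apply 𝕜 F u).map_tsum hT

theorem tsum_apply_mem {K : Submodule 𝕜 F} (hK : IsClosed (K : Set F)) (hT : Summable T)
    (h : ∀ i u, T i u ∈ K) (u : E) : (∑' i, T i) u ∈ K := by
  rw [tsum_apply hT]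
  exact tsum_mem hK fun i => h i u

end ContinuousLinearMap

section RankOne

variable {ι H : Type*} [NormedAddCommGroup H] [InnerProductSpace ℂ H]

@[simp]
theorem rankOne_apply (a b u : H) : rankOne a b u = ⟪b, u⟫_ℂ • a := rfl

theorem norm_rankOne (a b : H) : ‖rankOne a b‖ = ‖a‖ * ‖b‖ := by
  rw [rankOne, ContinuousLinearMap.norm_smulRight_apply, innerSL_apply_norm, mul_comm]

theorem summable_smul_rankOne [CompleteSpace H] {f : ι → ℂ} {a b : ι → H}
    (h : Summable fun i => ‖f i‖ * (‖a i‖ * ‖b i‖)) :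
    Summable fun i => f i • rankOne (a i) (b i) :=
  Summable.of_norm (by simpa only [norm_smul, norm_rankOne] using h)

variable {v δ : ι → H} {S : Set ι} {f : ι → ℂ}

theorem inner_tsum_smul_rankOne_apply
    (hδ : ∀ x y, x ∈ S → y ∈ S → ⟪v y, δ x⟫_ℂ = if y = x then 1 else 0)
    (hf : ∀ x ∉ S, f x = 0) (hT : Summable fun x => f x • rankOne (δ x) (v x))
    (u : H) {y : ι} (hy : y ∈ S) :
    ⟪v y, (∑' x, f x • rankOne (δ x) (v x)) u⟫_ℂ = f y * ⟪v y, u⟫_ℂ := by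
  have hTu : Summable fun x => (f x • rankOne (δ x) (v x)) u :=
    hT.mapL (ContinuousLinearMap.apply ℂ H u)
  rw [ContinuousLinearMap.tsum_apply hT, ← innerSL_apply_apply ℂ, (innerSL ℂ (v y)).map_tsum hTu,
    tsum_eq_single y]
  · simp [hδ y y hy hy]
  · intro x hxy
    by_cases hx : x ∈ S
    · simp [hδ x y hx hy, hxy.symm]
    · simp [hf x hx]

theorem eq_tsum_smul_rankOne {M : H →L[ℂ] H} (hdense : Dense (span ℂ (v '' S) : Set H))
    (hδ : ∀ x y, x ∈ S → y ∈ S → ⟪v y, δ x⟫_ℂ = if y = x then 1 else 0)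
    (hf : ∀ x ∉ S, f x = 0) (hT : Summable fun x => f x • rankOne (δ x) (v x))
    (hM : ∀ u, ∀ y ∈ S, ⟪v y, M u⟫_ℂ = f y * ⟪v y, u⟫_ℂ) :
    M = ∑' x, f x • rankOne (δ x) (v x) := by
  ext u
  refine eq_of_inner_eq_of_dense_span hdense ?_
  rintro _ ⟨y, hy, rfl⟩
  rw [hM u y hy, inner_tsum_smul_rankOne_apply hδ hf hT u hy]

end RankOne

/-- if `M_f` is bounded and `Σ |f(x)|√(c(x)R(x)) < ∞`, then the
range of `M_f` lies in `Fin`, the closure of the span of the Dirac masses. -/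
theorem stmt15 {V H : Type*} [NormedAddCommGroup H] [InnerProductSpace ℂ H] [CompleteSpace H]
    (N : Network V) (o : V) (v δ : V → H)
    (hdense : Dense (↑(Submodule.span ℂ (v '' {y | y ≠ o})) : Set H))
    (hδ : ∀ x y : V, x ≠ o → y ≠ o →
      ⟪v y, δ x⟫_ℂ = if y = x then 1 else 0)
    (hc : ∀ x : V, x ≠ o → ‖δ x‖ ^ 2 = N.totalCond x)
    (f : V → ℂ) (hfo : f o = 0)
    (M : H →L[ℂ] H)
    (hM : ∀ (u : H) (y : V), y ≠ o → ⟪v y, M u⟫_ℂ = f y * ⟪v y, u⟫_ℂ)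
    (hsum : Summable fun x : V => ‖f x‖ * Real.sqrt (N.totalCond x * ‖v x‖ ^ 2)) :
    ∀ u : H, M u ∈ (Submodule.span ℂ (Set.range δ)).topologicalClosure := by
  have hterm : (fun x => ‖f x‖ * Real.sqrt (N.totalCond x * ‖v x‖ ^ 2)) =
      fun x => ‖f x‖ * (‖δ x‖ * ‖v x‖) := by
    funext x
    by_cases hx : x = o
    · simp [hx, hfo]
    · rw [← hc x hx, Real.sqrt_mul (sq_nonneg _), Real.sqrt_sq (norm_nonneg _),
        Real.sqrt_sq (norm_nonneg _)]
  have hT := summable_smul_rankOne (hterm ▸ hsum)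
  have hf : ∀ x ∉ {y | y ≠ o}, f x = 0 := fun x hx => by rwa [not_not.mp hx]
  intro u
  rw [eq_tsum_smul_rankOne hdense hδ hf hT hM]
  refine ContinuousLinearMap.tsum_apply_mem (isClosed_topologicalClosure _) hT (fun x u => ?_) u
  exact le_topologicalClosure _ (smul_mem _ _ (smul_mem _ _ (subset_span ⟨x, rfl⟩)))
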